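/- arXiv:1804.10853 — 3 statements merged into one kernel-verified Lean document; each statement's English description precedes it below -/
import Mathlib

section
/- Let M be a connected n-dimensional smooth manifold and let E be a proper closed subset of M with nonempty interior. Then the dimension of the topological boundary ∂E of E in M is at least n − 1, i.e., for every s with 0 < s < n − 1, ∂E is not of 𝓗ˢ-measure zero. -/
/-! The closure of the interior of `E` is a nonempty proper closed set, so by connectedness its
frontier contains a point `x`. In a chart around `x`, a small ball meets both the interior of `E`
and the exterior of its closure; what remains of the ball lies in the frontier of `E`. Every line
parallel to a segment joining the two open sets, and close enough to it, must cross this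
remainder, so the orthogonal projection of the remainder onto a hyperplane contains an open set. Projections are
Lipschitz, hence the frontier has Hausdorff dimension at least `n - 1`. -/

open Manifold Set MeasureTheory

/-- A subset `A` of a manifold `M` modelled on `ℝⁿ` is of `𝓗ˢ`-measure zero if for every
coordinate chart `(U, φ)` of `M` (i.e. every chart in the atlas), the `s`-dimensional
Hausdorff measure of `φ(A ∩ U)` in `ℝⁿ` vanishes. -/
def HausdorffMeasureZero {n : ℕ} {M : Type*} [TopologicalSpace M]
    [ChartedSpace (EuclideanSpace ℝ (Fin n)) M] (s : ℝ) (A : Set M) : Prop :=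
  ∀ e ∈ atlas (EuclideanSpace ℝ (Fin n)) M, μH[s] (e '' (A ∩ e.source)) = 0

open Metric Module Topology
open scoped ENNReal

theorem exists_add_smul_sub_mem_diff_union {V : Type*} [AddCommGroup V] [Module ℝ V]
    [TopologicalSpace V] [IsTopologicalAddGroup V] [ContinuousSMul ℝ V] {U G H : Set V}
    (hU : Convex ℝ U) (hG : IsOpen G) (hH : IsOpen H) (hGH : Disjoint G H) {a b : V}
    (ha : a ∈ G ∩ U) (hb : b ∈ H ∩ U) :
    ∃ t : ℝ, a + t • (b - a) ∈ U \ (G ∪ H) := by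
  have hseg : ¬ segment ℝ a b ⊆ G ∪ H := fun hsub =>
    (convex_segment a b).isPreconnected.subset_or_subset hG hH hGH hsub |>.elim
      (fun hG' => hGH.ne_of_mem (hG' (right_mem_segment ℝ a b)) hb.1 rfl)
      (fun hH' => hGH.ne_of_mem ha.1 (hH' (left_mem_segment ℝ a b)) rfl)
  obtain ⟨p, hp, hpGH⟩ := not_subset.1 hseg
  have hpU : p ∈ U := hU.segment_subset ha.2 hb.2 hp
  rw [segment_eq_image'] at hp
  obtain ⟨t, -, rfl⟩ := hp
  exact ⟨t, hpU, hpGH⟩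

section InnerProductSpace

variable {E : Type*} [NormedAddCommGroup E] [InnerProductSpace ℝ E] [FiniteDimensional ℝ E]

theorem finrank_sub_one_le_dimH_diff_union {U G H : Set E} (hU : IsOpen U) (hUc : Convex ℝ U)
    (hG : IsOpen G) (hH : IsOpen H) (hGH : Disjoint G H)
    (hGU : (G ∩ U).Nonempty) (hHU : (H ∩ U).Nonempty) :
    ((finrank ℝ E - 1 : ℕ) : ℝ≥0∞) ≤ dimH (U \ (G ∪ H)) := by
  obtain ⟨g, hg⟩ := hGU
  obtain ⟨h, hh⟩ := hHU
  obtain ⟨δ₁, hδ₁, hballG⟩ := Metric.isOpen_iff.1 (hG.inter hU) g hg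
  obtain ⟨δ₂, hδ₂, hballH⟩ := Metric.isOpen_iff.1 (hH.inter hU) h hh
  set δ := min δ₁ δ₂
  set u := h - g
  have hu : u ≠ 0 := sub_ne_zero.2 fun hgh => hGH.ne_of_mem hg.1 hh.1 hgh.symm
  set K := (ℝ ∙ u)ᗮ
  have hK : finrank ℝ K = finrank ℝ E - 1 := by
    have := Submodule.finrank_add_finrank_orthogonal (ℝ ∙ u)
    rw [finrank_span_singleton hu] at this
    exact (Nat.sub_eq_of_eq_add' this.symm).symm
  set π := K.orthogonalProjectionOnto
  have hball : ball (π g) δ ⊆ π '' (U \ (G ∪ H)) := by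
    intro y hy
    set k : K := y - π g
    have hk : ‖(k : E)‖ < δ := by
      rwa [← Submodule.coe_norm, ← dist_eq_norm]
    have hgk : g + k ∈ G ∩ U := hballG <| mem_ball_iff_norm.2 <| by
      simpa using hk.trans_le (min_le_left _ _)
    have hhk : h + k ∈ H ∩ U := hballH <| mem_ball_iff_norm.2 <| by
      simpa using hk.trans_le (min_le_right _ _)
    obtain ⟨t, ht⟩ := exists_add_smul_sub_mem_diff_union hUc hG hH hGH hgk hhk
    refine ⟨_, ht, ?_⟩
    have hπu : π u = 0 := Submodule.orthogonalProjectionOnto_orthogonalComplement_singleton_eq_zero u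
    rw [add_sub_add_right_eq_sub, map_add, map_add, map_smul, hπu, smul_zero, add_zero,
      Submodule.orthogonalProjectionOnto_mem_subspace_eq_self, add_sub_cancel]
  calc ((finrank ℝ E - 1 : ℕ) : ℝ≥0∞) = dimH (ball (π g) δ) := by
        rw [Real.dimH_of_mem_nhds (ball_mem_nhds _ (lt_min hδ₁ hδ₂)), hK]
    _ ≤ dimH (π '' (U \ (G ∪ H))) := dimH_mono hball
    _ ≤ dimH (U \ (G ∪ H)) := K.lipschitzWith_orthogonalProjectionOnto.dimH_image_le _

end InnerProductSpace

theorem OpenPartialHomeomorph.natCast_finrank_sub_one_le_dimH_image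
    {M F : Type*} [TopologicalSpace M] [NormedAddCommGroup F] [InnerProductSpace ℝ F]
    [FiniteDimensional ℝ F] (e : OpenPartialHomeomorph M F) {x : M} (hx : x ∈ e.source)
    {A B : Set M} (hA : IsOpen A) (hB : IsOpen B) (hAB : Disjoint A B)
    (hxA : x ∈ closure A) (hxB : x ∈ closure B) :
    ((finrank ℝ F - 1 : ℕ) : ℝ≥0∞) ≤ dimH (e '' ((A ∪ B)ᶜ ∩ e.source)) := by
  obtain ⟨r, hr, hball⟩ := Metric.isOpen_iff.1 e.open_target (e x) (e.map_source hx)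
  have hmeet {C : Set M} (hC : x ∈ closure C) :
      (e.target ∩ e.symm ⁻¹' C ∩ ball (e x) r).Nonempty := by
    have hnhds : e.source ∩ e ⁻¹' ball (e x) r ∈ 𝓝 x :=
      (e.isOpen_inter_preimage isOpen_ball).mem_nhds ⟨hx, mem_ball_self hr⟩
    obtain ⟨y, ⟨hys, hyr⟩, hyC⟩ := mem_closure_iff_nhds.1 hC _ hnhds
    exact ⟨e y, ⟨e.map_source hys, by rwa [mem_preimage, e.left_inv hys]⟩, hyr⟩
  refine (finrank_sub_one_le_dimH_diff_union isOpen_ball (convex_ball _ _)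
    (e.isOpen_inter_preimage_symm hA) (e.isOpen_inter_preimage_symm hB)
    ((hAB.preimage e.symm).mono inter_subset_right inter_subset_right)
    (hmeet hxA) (hmeet hxB)).trans (dimH_mono ?_)
  rw [inter_comm _ e.source, e.image_source_inter_eq']
  rintro p ⟨hp, hpAB⟩
  refine ⟨hball hp, ?_⟩
  rintro (hpA | hpB)
  · exact hpAB (Or.inl ⟨hball hp, hpA⟩)
  · exact hpAB (Or.inr ⟨hball hp, hpB⟩)

theorem stmt6_general {n : ℕ}
    {M : Type*} [TopologicalSpace M] [ChartedSpace (EuclideanSpace ℝ (Fin n)) M]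
    [ConnectedSpace M]
    (E : Set M) (hE : IsClosed E) (hEne : E ≠ Set.univ)
    (hint : (interior E).Nonempty) :
    ∀ s : ℝ, 0 < s → s < (n : ℝ) - 1 →
      ¬ HausdorffMeasureZero (n := n) s (frontier E) := by
  intro s hs hsn hzero
  have hn : 1 < n := by exact_mod_cast (by linarith : (1 : ℝ) < n)
  set A := interior E
  obtain ⟨x, hx⟩ : (frontier (closure A)).Nonempty := nonempty_frontier_iff.2
    ⟨hint.closure, fun h => hEne (univ_subset_iff.1 (h ▸ closure_minimal interior_subset hE))⟩
  rw [frontier_eq_closure_inter_closure, closure_closure] at hx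
  set e := chartAt (EuclideanSpace ℝ (Fin n)) x
  have hfrontier : (A ∪ (closure A)ᶜ)ᶜ ⊆ frontier E := by
    rw [compl_union, compl_compl, inter_comm, ← sdiff_eq, ← isOpen_interior.frontier_eq]
    exact frontier_interior_subset
  have hdim : ((n - 1 : ℕ) : ℝ≥0∞) ≤ dimH (e '' (frontier E ∩ e.source)) := by
    simpa only [finrank_euclideanSpace_fin] using
      (e.natCast_finrank_sub_one_le_dimH_image (mem_chart_source _ x) isOpen_interior
        isClosed_closure.isOpen_compl (disjoint_compl_right_iff_subset.2 subset_closure)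
        hx.1 hx.2).trans (dimH_mono (image_mono (inter_subset_inter_left _ hfrontier)))
  have hsn' : s.toNNReal < (n - 1 : ℕ) := by
    rw [Real.toNNReal_lt_natCast (by omega), Nat.cast_sub hn.le, Nat.cast_one]
    exact hsn
  have htop := hausdorffMeasure_of_lt_dimH ((ENNReal.coe_lt_natCast.2 hsn').trans_le hdim)
  rw [Real.coe_toNNReal s hs.le, hzero e (chart_mem_atlas _ x)] at htop
  exact ENNReal.zero_ne_top htop

/-- **key lemma.** Let `M` be a connected `n`-dimensional smooth manifold and
`E ⊆ M` a proper closed subset with nonempty interior.  Then the dimension of the topological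
boundary (frontier) of `E` is at least `n - 1`, i.e. for every `s` with `0 < s < n - 1`,
`frontier E` is not of `𝓗ˢ`-measure zero. -/
theorem stmt6 {n : ℕ}
    {M : Type*} [TopologicalSpace M] [ChartedSpace (EuclideanSpace ℝ (Fin n)) M]
    [IsManifold (𝓡 n) (⊤ : ℕ∞) M] [ConnectedSpace M]
    (E : Set M) (hE : IsClosed E) (hEne : E ≠ Set.univ)
    (hint : (interior E).Nonempty) :
    ∀ s : ℝ, 0 < s → s < (n : ℝ) - 1 →
      ¬ HausdorffMeasureZero (n := n) s (frontier E) :=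
  stmt6_general E hE hEne hint
end

section
/- Let E be a closed subset of ℝⁿ with E ≠ ℝⁿ and with nonempty interior. Then the Hausdorff dimension of the topological boundary (frontier) of E is at least n − 1. -/
open Set ENNReal Module Topology

/-!
Pick `x` in the interior of `E` and `y ∉ E`, and set `v = y - x`. For every `p` near `x`, the line
`t ↦ p + t • v` starts in `E` and leaves it, so it crosses `frontier E`. Hence the orthogonal
projection onto the hyperplane `(ℝ ∙ v)ᗮ`, which is constant on these lines, maps `frontier E`
onto a set containing a neighbourhood of the image of `x` in this `(n - 1)`-dimensional space, and
projections do not increase Hausdorff dimension.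
-/

lemma exists_add_smul_mem_frontier {X : Type*} [AddCommGroup X] [Module ℝ X] [TopologicalSpace X]
    [ContinuousAdd X] [ContinuousSMul ℝ X] {E : Set X} {p v : X} (hp : p ∈ E) (hpv : p + v ∉ E) :
    ∃ t : ℝ, p + t • v ∈ frontier E := by
  have hline : Continuous fun t : ℝ => p + t • v := by fun_prop
  obtain ⟨t, ht⟩ : (frontier ((fun t : ℝ => p + t • v) ⁻¹' E)).Nonempty :=
    nonempty_frontier_iff.2
      ⟨⟨0, by simpa using hp⟩, fun h => hpv (by simpa using eq_univ_iff_forall.1 h 1)⟩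
  exact ⟨t, hline.frontier_preimage_subset E ht⟩

lemma image_subset_image_frontier_of_map_eq_zero {X Y : Type*} [AddCommGroup X] [Module ℝ X]
    [TopologicalSpace X] [ContinuousAdd X] [ContinuousSMul ℝ X] [AddCommGroup Y] [Module ℝ Y]
    (f : X →ₗ[ℝ] Y) {E s : Set X} {v : X} (hfv : f v = 0) (hs : s ⊆ E)
    (hsv : ∀ p ∈ s, p + v ∉ E) : f '' s ⊆ f '' frontier E := by
  rintro _ ⟨p, hp, rfl⟩
  obtain ⟨t, ht⟩ := exists_add_smul_mem_frontier (hs hp) (hsv p hp)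
  exact ⟨p + t • v, ht, by simp [hfv]⟩

lemma finrank_le_dimH_of_image_mem_nhds {X Y : Type*} [EMetricSpace X] [NormedAddCommGroup Y]
    [NormedSpace ℝ Y] [FiniteDimensional ℝ Y] {f : X → Y} {K : NNReal} (hf : LipschitzWith K f)
    {s : Set X} {y : Y} (h : f '' s ∈ 𝓝 y) : (finrank ℝ Y : ℝ≥0∞) ≤ dimH s :=
  (Real.dimH_of_mem_nhds h).symm.le.trans (hf.dimH_image_le s)

lemma finrank_sub_one_le_finrank_orthogonal_span_singleton {X : Type*} [NormedAddCommGroup X]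
    [InnerProductSpace ℝ X] [FiniteDimensional ℝ X] (v : X) :
    finrank ℝ X - 1 ≤ finrank ℝ (ℝ ∙ v)ᗮ := by
  have hsum := Submodule.finrank_add_finrank_orthogonal (ℝ ∙ v)
  have hline : finrank ℝ (ℝ ∙ v) ≤ 1 := by
    simpa using finrank_span_le_card (R := ℝ) ({v} : Set X)
  omega

lemma Submodule.orthogonalProjectionOnto_surjective {X : Type*} [NormedAddCommGroup X]
    [InnerProductSpace ℝ X] (K : Submodule ℝ X) [K.HasOrthogonalProjection] :
    Function.Surjective K.orthogonalProjectionOnto :=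
  fun k => ⟨k, K.orthogonalProjectionOnto_mem_subspace_eq_self k⟩

theorem finrank_sub_one_le_dimH_frontier {X : Type*} [NormedAddCommGroup X]
    [InnerProductSpace ℝ X] [FiniteDimensional ℝ X] {E : Set X} (hE : IsClosed E)
    (hEne : E ≠ univ) (hint : (interior E).Nonempty) :
    (finrank ℝ X : ℝ≥0∞) - 1 ≤ dimH (frontier E) := by
  obtain ⟨x, hx⟩ := hint
  obtain ⟨y, hy⟩ := nonempty_compl.2 hEne
  set v := y - x
  set π := (ℝ ∙ v)ᗮ.orthogonalProjectionOnto
  set s := interior E ∩ (· + v) ⁻¹' Eᶜ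
  have hs : IsOpen s := isOpen_interior.inter (hE.isOpen_compl.preimage (continuous_add_const v))
  have hxs : x ∈ s := ⟨hx, by simpa [v] using hy⟩
  have hπs : π '' s ∈ 𝓝 (π x) :=
    (π.isOpenMap (Submodule.orthogonalProjectionOnto_surjective _) s hs).mem_nhds ⟨x, hxs, rfl⟩
  have hπE : π '' s ⊆ π '' frontier E :=
    image_subset_image_frontier_of_map_eq_zero π.toLinearMap
      (Submodule.orthogonalProjectionOnto_orthogonalComplement_singleton_eq_zero v)
      (fun p hp => interior_subset hp.1) fun p hp => hp.2
  calc (finrank ℝ X : ℝ≥0∞) - 1 ≤ ((finrank ℝ X - 1 : ℕ) : ℝ≥0∞) := by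
        rw [ENNReal.natCast_sub, Nat.cast_one]
    _ ≤ finrank ℝ (ℝ ∙ v)ᗮ := by
        exact_mod_cast finrank_sub_one_le_finrank_orthogonal_span_singleton v
    _ ≤ dimH (frontier E) :=
        finrank_le_dimH_of_image_mem_nhds π.lipschitz (Filter.mem_of_superset hπs hπE)

/-- Let `E` be a closed subset of `ℝⁿ` with `E ≠ ℝⁿ` and with nonempty
interior.  Then the Hausdorff dimension of the topological boundary (frontier) of `E` is at
least `n - 1`. -/
theorem stmt7 {n : ℕ} (E : Set (EuclideanSpace ℝ (Fin n)))
    (hE : IsClosed E) (hEne : E ≠ Set.univ) (hint : (interior E).Nonempty) :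
    (n : ℝ≥0∞) - 1 ≤ dimH (frontier E) := by
  simpa [finrank_euclideanSpace] using finrank_sub_one_le_dimH_frontier hE hEne hint
end

section
/- Let E be a closed subset of ℝⁿ (n ≥ 2) with 0 ∉ E, and suppose the open ball B(e₁, δ) of radius δ ∈ (0, 1) centered at the first standard basis vector e₁ is contained in E. Then for every x with ‖x − e₁‖ < δ there exist a point y in the frontier of E and a scalar t ∈ (0, 1] with y = t·x; consequently the image of the frontier of E under the radial projection π(x) = x/‖x‖ contains the set {x/‖x‖ : ‖x − e₁‖ < δ}, which is a neighborhood of e₁ in the unit sphere Sⁿ⁻¹. -/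
open Set Metric

/-! The segment `[0, x]` is connected, contains `x ∈ E` and `0 ∉ E`, so it meets the frontier
of `E`; since `E` is closed, the meeting point lies in `E` and is therefore not `0`. Radial
projection is invariant under positive scaling, and it fixes the unit sphere, so the image of
`B(e₁, δ)` contains the neighbourhood `B(e₁, δ) ∩ Sⁿ⁻¹` of `e₁`. -/

theorem IsPreconnected.inter_frontier_nonempty {X : Type*} [TopologicalSpace X] {s t : Set X}
    (hs : IsPreconnected s) (hst : (s ∩ t).Nonempty) (hsdt : (s \ t).Nonempty) :
    (s ∩ frontier t).Nonempty := by
  by_contra! h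
  have hcover : s ⊆ interior t ∪ (closure t)ᶜ := fun x hx => by
    by_cases hxt : x ∈ closure t
    · exact .inl (not_not.1 fun hi => h.subset ⟨hx, hxt, hi⟩)
    · exact .inr hxt
  have hdisj : Disjoint (interior t) (closure t)ᶜ :=
    disjoint_compl_right_iff_subset.2 (interior_subset.trans subset_closure)
  rcases hs.subset_or_subset isOpen_interior isClosed_closure.isOpen_compl hdisj hcover with
    hint | hext
  · obtain ⟨x, hxs, hxt⟩ := hsdt
    exact hxt (interior_subset (hint hxs))
  · obtain ⟨x, hxs, hxt⟩ := hst
    exact hext hxs (subset_closure hxt)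

theorem IsClosed.exists_smul_mem_frontier {V : Type*} [AddCommGroup V] [Module ℝ V]
    [TopologicalSpace V] [IsTopologicalAddGroup V] [ContinuousSMul ℝ V] {E : Set V}
    (hE : IsClosed E) (h0 : (0 : V) ∉ E) {x : V} (hx : x ∈ E) :
    ∃ t ∈ Ioc (0 : ℝ) 1, t • x ∈ frontier E := by
  obtain ⟨y, hy, hyE⟩ := (convex_segment (0 : V) x).isPreconnected.inter_frontier_nonempty
    ⟨x, right_mem_segment ℝ 0 x, hx⟩ ⟨0, left_mem_segment ℝ 0 x, h0⟩
  rw [segment_eq_image] at hy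
  obtain ⟨t, ⟨ht0, ht1⟩, rfl⟩ := hy
  simp only [smul_zero, zero_add] at hyE ⊢
  refine ⟨t, ⟨ht0.lt_of_ne ?_, ht1⟩, hyE⟩
  rintro rfl
  exact h0 (by simpa using hE.frontier_subset hyE)

theorem NormedSpace.normalize_image_ball_mem_nhdsWithin_sphere {V : Type*}
    [NormedAddCommGroup V] [NormedSpace ℝ V] (c : V) {r : ℝ} (hr : 0 < r) :
    normalize '' ball c r ∈ nhdsWithin c (sphere (0 : V) 1) := by
  refine Filter.mem_of_superset (inter_mem_nhdsWithin _ (ball_mem_nhds c hr)) ?_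
  rintro z ⟨hzs, hzb⟩
  exact ⟨z, hzb, normalize_eq_self_of_norm_eq_one (by simpa using hzs)⟩

theorem stmt10_general {n : ℕ} (E : Set (EuclideanSpace ℝ (Fin n)))
    (hE : IsClosed E) (h0 : (0 : EuclideanSpace ℝ (Fin n)) ∉ E)
    (e₁ : EuclideanSpace ℝ (Fin n))
    (δ : ℝ) (hδ : δ ∈ Set.Ioo (0 : ℝ) 1)
    (hball : Metric.ball e₁ δ ⊆ E) :
    (∀ x : EuclideanSpace ℝ (Fin n), ‖x - e₁‖ < δ →
        ∃ y ∈ frontier E, ∃ t ∈ Set.Ioc (0 : ℝ) 1, y = t • x) ∧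
      {y : EuclideanSpace ℝ (Fin n) | ∃ x, ‖x - e₁‖ < δ ∧ y = ‖x‖⁻¹ • x} ⊆
        (fun z : EuclideanSpace ℝ (Fin n) => ‖z‖⁻¹ • z) '' frontier E ∧
      {y : EuclideanSpace ℝ (Fin n) | ∃ x, ‖x - e₁‖ < δ ∧ y = ‖x‖⁻¹ • x} ∈
        nhdsWithin e₁ (Metric.sphere (0 : EuclideanSpace ℝ (Fin n)) 1) := by
  have hfrontier (x : EuclideanSpace ℝ (Fin n)) (hx : ‖x - e₁‖ < δ) :
      ∃ t ∈ Ioc (0 : ℝ) 1, t • x ∈ frontier E :=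
    hE.exists_smul_mem_frontier h0 (hball (mem_ball_iff_norm.2 hx))
  refine ⟨fun x hx => ?_, ?_, ?_⟩
  · obtain ⟨t, ht, hty⟩ := hfrontier x hx
    exact ⟨t • x, hty, t, ht, rfl⟩
  · rintro _ ⟨x, hx, rfl⟩
    obtain ⟨t, ht, hty⟩ := hfrontier x hx
    exact ⟨t • x, hty, NormedSpace.normalize_smul_of_pos ht.1 x⟩
  · refine Filter.mem_of_superset
      (NormedSpace.normalize_image_ball_mem_nhdsWithin_sphere e₁ hδ.1) ?_
    rintro _ ⟨x, hx, rfl⟩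
    exact ⟨x, mem_ball_iff_norm.1 hx, rfl⟩

/-- Let `E` be a closed subset of `ℝⁿ` (`n ≥ 2`) with `0 ∉ E`, and suppose
the open ball `B(e₁, δ)` with `δ ∈ (0, 1)`, centered at the first standard basis vector `e₁`,
is contained in `E`.  Then for every `x` with `‖x - e₁‖ < δ` there exist a point `y` in the
frontier of `E` and a scalar `t ∈ (0, 1]` with `y = t • x`; consequently the image of the
frontier of `E` under the radial projection `π(x) = x / ‖x‖` contains the set
`{x / ‖x‖ : ‖x - e₁‖ < δ}`, which is a neighborhood of `e₁` in the unit sphere `Sⁿ⁻¹`. -/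
theorem stmt10 {n : ℕ} (hn : 2 ≤ n) (E : Set (EuclideanSpace ℝ (Fin n)))
    (hE : IsClosed E) (h0 : (0 : EuclideanSpace ℝ (Fin n)) ∉ E)
    (e₁ : EuclideanSpace ℝ (Fin n))
    (he₁ : ∀ i : Fin n, e₁ i = if i.val = 0 then 1 else 0)
    (δ : ℝ) (hδ : δ ∈ Set.Ioo (0 : ℝ) 1)
    (hball : Metric.ball e₁ δ ⊆ E) :
    (∀ x : EuclideanSpace ℝ (Fin n), ‖x - e₁‖ < δ →
        ∃ y ∈ frontier E, ∃ t ∈ Set.Ioc (0 : ℝ) 1, y = t • x) ∧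
      {y : EuclideanSpace ℝ (Fin n) | ∃ x, ‖x - e₁‖ < δ ∧ y = ‖x‖⁻¹ • x} ⊆
        (fun z : EuclideanSpace ℝ (Fin n) => ‖z‖⁻¹ • z) '' frontier E ∧
      {y : EuclideanSpace ℝ (Fin n) | ∃ x, ‖x - e₁‖ < δ ∧ y = ‖x‖⁻¹ • x} ∈
        nhdsWithin e₁ (Metric.sphere (0 : EuclideanSpace ℝ (Fin n)) 1) :=
  stmt10_general E hE h0 e₁ δ hδ hball
end
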